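/- There exist absolute constants c₁, c₂ > 0 such that for every integer τ ≥ 1, c₁ · τ^{−1/2} ≤ π/2 − Σ_{k=0}^{τ} c_k ≤ c₂ · τ^{−1/2}. -/

import Mathlib

/-!
Write `c_k = a_k / (2k + 1)`, where `a_k = binom(2k, k) / 4^k` are the Taylor coefficients of
`(1 - u)^(-1/2)`. Since `a_k - a_{k+1} = a_k / (2k + 2)`, telescoping squeezes the tail
`∑_{k ≥ m} c_k` between `a_m` and `2 a_m`, and `a_m ≍ m^(-1/2)` because `a_k^2 (2k + 1)`
decreases from `1` while `4k a_k^2` increases from `1`.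

That the full series sums to `π/2` comes from the convolution identity `∑_{i+j=n} a_i a_j = 1`,
i.e. `(∑ a_k u^k)^2 = 1/(1 - u)`. It pins the truncation `P_n(u) = ∑_{k ≤ n} a_k u^k` by
`1 - u^(n+1) ≤ P_n(u) √(1 - u) ≤ 1`; as `P_n(x^2)` is the derivative of the truncated arcsine
series, `arcsin x - ∑_{k ≤ n} c_k x^(2k+1)` lies between `0` and `x^(2n+3) / √(1 - x^2)`,
and one lets `n → ∞` and `x → 1`.
-/

noncomputable def arcsinCoeff (k : ℕ) : ℝ :=
  (Nat.factorial (2 * k) : ℝ) / (4 ^ k * (Nat.factorial k : ℝ) ^ 2 * (2 * k + 1))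

open Finset Real Filter Topology
open scoped Nat

noncomputable def invSqrtCoeff (k : ℕ) : ℝ := k.centralBinom / 4 ^ k

lemma invSqrtCoeff_pos (k : ℕ) : 0 < invSqrtCoeff k := by
  unfold invSqrtCoeff
  have := k.centralBinom_pos
  positivity

@[simp] lemma invSqrtCoeff_zero : invSqrtCoeff 0 = 1 := by simp [invSqrtCoeff]

lemma invSqrtCoeff_succ (k : ℕ) :
    invSqrtCoeff (k + 1) = invSqrtCoeff k * (2 * k + 1) / (2 * k + 2) := by
  have h : ((k + 1 : ℕ) : ℝ) * (k + 1).centralBinom = 2 * (2 * k + 1) * k.centralBinom := by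
    exact_mod_cast k.succ_mul_centralBinom_succ
  unfold invSqrtCoeff
  field_simp
  push_cast at h
  rw [pow_succ]
  linear_combination 2 * 4 ^ k * h

lemma arcsinCoeff_eq (k : ℕ) : arcsinCoeff k = invSqrtCoeff k / (2 * k + 1) := by
  have h : (k.centralBinom : ℝ) = (2 * k)! / (k ! * k !) := by
    rw [Nat.centralBinom_eq_two_mul_choose, Nat.cast_choose ℝ (show k ≤ 2 * k by omega)]
    rw [show 2 * k - k = k by omega]
  rw [arcsinCoeff, invSqrtCoeff, h]
  field_simp

lemma arcsinCoeff_nonneg (k : ℕ) : 0 ≤ arcsinCoeff k := by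
  unfold arcsinCoeff
  positivity

lemma invSqrtCoeff_sub_succ (k : ℕ) :
    invSqrtCoeff k - invSqrtCoeff (k + 1) = invSqrtCoeff k / (2 * k + 2) := by
  rw [invSqrtCoeff_succ]
  field_simp
  ring

lemma invSqrtCoeff_sub_succ_le_arcsinCoeff (k : ℕ) :
    invSqrtCoeff k - invSqrtCoeff (k + 1) ≤ arcsinCoeff k := by
  rw [invSqrtCoeff_sub_succ, arcsinCoeff_eq]
  gcongr
  · exact (invSqrtCoeff_pos k).le
  · linarith

lemma arcsinCoeff_le_two_mul_invSqrtCoeff_sub_succ (k : ℕ) :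
    arcsinCoeff k ≤ 2 * (invSqrtCoeff k - invSqrtCoeff (k + 1)) := by
  rw [invSqrtCoeff_sub_succ, arcsinCoeff_eq, mul_div_assoc',
    div_le_div_iff₀ (by positivity) (by positivity)]
  have := invSqrtCoeff_pos k
  nlinarith

lemma sq_invSqrtCoeff_mul_le (k : ℕ) : invSqrtCoeff k ^ 2 * (2 * k + 1) ≤ 1 := by
  induction k with
  | zero => simp
  | succ k ih =>
    rw [invSqrtCoeff_succ, div_pow, div_mul_eq_mul_div, div_le_one (by positivity)]
    push_cast
    nlinarith [sq_nonneg (invSqrtCoeff k)]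

lemma one_le_sq_invSqrtCoeff_mul {k : ℕ} (hk : 1 ≤ k) : 1 ≤ invSqrtCoeff k ^ 2 * (4 * k) := by
  induction k, hk using Nat.le_induction with
  | base => norm_num [invSqrtCoeff_succ]
  | succ k hk ih =>
    rw [invSqrtCoeff_succ, div_pow, div_mul_eq_mul_div, le_div_iff₀ (by positivity)]
    push_cast
    nlinarith [sq_nonneg (invSqrtCoeff k)]

lemma invSqrtCoeff_le (k : ℕ) : invSqrtCoeff k ≤ (√(2 * k + 1))⁻¹ := by
  rw [← sqrt_inv, le_sqrt (invSqrtCoeff_pos k).le (by positivity), ← one_div,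
    le_div_iff₀ (by positivity)]
  exact sq_invSqrtCoeff_mul_le k

lemma inv_sqrt_le_invSqrtCoeff (k : ℕ) : (√(4 * k))⁻¹ ≤ invSqrtCoeff k := by
  rcases Nat.eq_zero_or_pos k with rfl | hk
  · simp
  rw [← sqrt_inv, sqrt_le_left (invSqrtCoeff_pos k).le,
    inv_le_iff_one_le_mul₀ (by positivity)]
  exact one_le_sq_invSqrtCoeff_mul hk

section CauchyProduct

variable {R : Type*} [CommSemiring R] {f g : ℕ → R}

lemma two_mul_sum_antidiagonal_fst_mul (a : ℕ → R) (n : ℕ) :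
    2 * ∑ p ∈ antidiagonal n, (p.1 : R) * (a p.1 * a p.2) =
      n * ∑ p ∈ antidiagonal n, a p.1 * a p.2 := by
  have hswap : ∑ p ∈ antidiagonal n, (p.1 : R) * (a p.1 * a p.2) =
      ∑ p ∈ antidiagonal n, (p.2 : R) * (a p.1 * a p.2) := by
    rw [← Nat.sum_antidiagonal_swap]
    exact sum_congr rfl fun p _ => by rw [Prod.fst_swap, Prod.snd_swap, mul_comm (a p.2)]
  rw [two_mul]
  nth_rw 2 [hswap]
  rw [← sum_add_distrib, mul_sum]
  refine sum_congr rfl fun p hp => ?_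
  rw [← add_mul, ← Nat.cast_add, mem_antidiagonal.1 hp]

lemma sum_range_sum_antidiagonal_eq (N : ℕ) :
    ∑ m ∈ range N, ∑ p ∈ antidiagonal m, f p.1 * g p.2 =
      ∑ m ∈ range N, f m * ∑ k ∈ range (N - m), g k := by
  simp only [Nat.sum_antidiagonal_eq_sum_range_succ_mk, mul_sum,
    sum_range_diag_flip N (fun i j => f i * g j)]

variable [PartialOrder R] [IsOrderedRing R]

lemma sum_range_sum_antidiagonal_le_mul (hf : 0 ≤ f) (hg : 0 ≤ g) (n : ℕ) :
    ∑ m ∈ range n, ∑ p ∈ antidiagonal m, f p.1 * g p.2 ≤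
      (∑ k ∈ range n, f k) * ∑ k ∈ range n, g k := by
  rw [sum_range_sum_antidiagonal_eq, sum_mul]
  gcongr with m
  · exact hf m
  · exact fun k _ _ => hg k
  · omega

lemma mul_le_sum_range_sum_antidiagonal (hf : 0 ≤ f) (hg : 0 ≤ g) (n : ℕ) :
    (∑ k ∈ range (n + 1), f k) * ∑ k ∈ range (n + 1), g k ≤
      ∑ m ∈ range (2 * n + 1), ∑ p ∈ antidiagonal m, f p.1 * g p.2 := by
  rw [sum_range_sum_antidiagonal_eq, sum_mul]
  calc ∑ m ∈ range (n + 1), f m * ∑ k ∈ range (n + 1), g k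
      ≤ ∑ m ∈ range (n + 1), f m * ∑ k ∈ range (2 * n + 1 - m), g k := by
        gcongr with m hm
        · exact hf m
        · exact fun k _ _ => hg k
        · have := mem_range.1 hm; omega
    _ ≤ ∑ m ∈ range (2 * n + 1), f m * ∑ k ∈ range (2 * n + 1 - m), g k := by
        gcongr
        · exact fun m _ _ => mul_nonneg (hf m) (sum_nonneg fun k _ => hg k)
        · omega

end CauchyProduct

lemma sum_antidiagonal_invSqrtCoeff_mul (n : ℕ) :
    ∑ p ∈ antidiagonal n, invSqrtCoeff p.1 * invSqrtCoeff p.2 = 1 := by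
  induction n with
  | zero => simp
  | succ n ih =>
    -- `∑_{i+j=n+1} i a_i a_j` is `(n + 1)/2` times the sum at level `n + 1` by symmetry,
    -- and also at level `n` after the shift `hshift`
    have h := two_mul_sum_antidiagonal_fst_mul invSqrtCoeff (n + 1)
    rw [Nat.sum_antidiagonal_succ] at h
    have hshift : ∀ p ∈ antidiagonal n,
        ((p.1 + 1 : ℕ) : ℝ) * (invSqrtCoeff (p.1 + 1) * invSqrtCoeff p.2) =
          (p.1 + 1 / 2) * (invSqrtCoeff p.1 * invSqrtCoeff p.2) := by
      intro p _
      rw [invSqrtCoeff_succ]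
      push_cast
      field_simp
    rw [sum_congr rfl hshift] at h
    have hn := two_mul_sum_antidiagonal_fst_mul invSqrtCoeff n
    simp only [add_mul, sum_add_distrib, ← mul_sum, ih] at h hn
    push_cast at h
    refine mul_left_cancel₀ (show (n : ℝ) + 1 ≠ 0 by positivity) ?_
    linarith

noncomputable def invSqrtPartial (n : ℕ) (u : ℝ) : ℝ :=
  ∑ k ∈ range (n + 1), invSqrtCoeff k * u ^ k

lemma invSqrtPartial_nonneg (n : ℕ) {u : ℝ} (hu : 0 ≤ u) : 0 ≤ invSqrtPartial n u :=
  sum_nonneg fun k _ => mul_nonneg (invSqrtCoeff_pos k).le (pow_nonneg hu k)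

lemma sum_antidiagonal_invSqrtCoeff_mul_pow (u : ℝ) (m : ℕ) :
    ∑ p ∈ antidiagonal m, invSqrtCoeff p.1 * u ^ p.1 * (invSqrtCoeff p.2 * u ^ p.2) = u ^ m := by
  calc ∑ p ∈ antidiagonal m, invSqrtCoeff p.1 * u ^ p.1 * (invSqrtCoeff p.2 * u ^ p.2)
      = ∑ p ∈ antidiagonal m, invSqrtCoeff p.1 * invSqrtCoeff p.2 * u ^ m :=
        sum_congr rfl fun p hp => by rw [← mem_antidiagonal.1 hp, pow_add]; ring
    _ = u ^ m := by rw [← sum_mul, sum_antidiagonal_invSqrtCoeff_mul, one_mul]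

lemma one_sub_pow_le_sq_invSqrtPartial_mul (n : ℕ) {u : ℝ} (hu₀ : 0 ≤ u) (hu₁ : u ≤ 1) :
    1 - u ^ (n + 1) ≤ invSqrtPartial n u ^ 2 * (1 - u) := by
  have hb : 0 ≤ fun k => invSqrtCoeff k * u ^ k :=
    fun k => mul_nonneg (invSqrtCoeff_pos k).le (pow_nonneg hu₀ k)
  have h := sum_range_sum_antidiagonal_le_mul hb hb (n + 1)
  simp only [sum_antidiagonal_invSqrtCoeff_mul_pow] at h
  rw [← geom_sum_mul_neg, sq]
  exact mul_le_mul_of_nonneg_right h (by linarith)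

lemma sq_invSqrtPartial_mul_le (n : ℕ) {u : ℝ} (hu₀ : 0 ≤ u) (hu₁ : u ≤ 1) :
    invSqrtPartial n u ^ 2 * (1 - u) ≤ 1 := by
  have hb : 0 ≤ fun k => invSqrtCoeff k * u ^ k :=
    fun k => mul_nonneg (invSqrtCoeff_pos k).le (pow_nonneg hu₀ k)
  have h := mul_le_sum_range_sum_antidiagonal hb hb n
  simp only [sum_antidiagonal_invSqrtCoeff_mul_pow] at h
  calc invSqrtPartial n u ^ 2 * (1 - u) ≤ (∑ m ∈ range (2 * n + 1), u ^ m) * (1 - u) := by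
        rw [sq]; exact mul_le_mul_of_nonneg_right h (by linarith)
    _ ≤ 1 := by rw [geom_sum_mul_neg]; linarith [pow_nonneg hu₀ (2 * n + 1)]

lemma invSqrtPartial_mul_sqrt_le (n : ℕ) {u : ℝ} (hu₀ : 0 ≤ u) (hu₁ : u ≤ 1) :
    invSqrtPartial n u * √(1 - u) ≤ 1 := by
  have hq₀ : 0 ≤ invSqrtPartial n u * √(1 - u) :=
    mul_nonneg (invSqrtPartial_nonneg n hu₀) (sqrt_nonneg _)
  rw [← sq_le_one_iff₀ hq₀, mul_pow, sq_sqrt (by linarith)]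
  exact sq_invSqrtPartial_mul_le n hu₀ hu₁

lemma one_sub_pow_le_invSqrtPartial_mul_sqrt (n : ℕ) {u : ℝ} (hu₀ : 0 ≤ u) (hu₁ : u ≤ 1) :
    1 - u ^ (n + 1) ≤ invSqrtPartial n u * √(1 - u) := by
  have hq₀ : 0 ≤ invSqrtPartial n u * √(1 - u) :=
    mul_nonneg (invSqrtPartial_nonneg n hu₀) (sqrt_nonneg _)
  have hq₁ := invSqrtPartial_mul_sqrt_le n hu₀ hu₁
  calc 1 - u ^ (n + 1) ≤ (invSqrtPartial n u * √(1 - u)) ^ 2 := by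
        rw [mul_pow, sq_sqrt (by linarith)]
        exact one_sub_pow_le_sq_invSqrtPartial_mul n hu₀ hu₁
    _ ≤ invSqrtPartial n u * √(1 - u) := by nlinarith

lemma inv_sqrt_sub_invSqrtPartial_mem_Icc (n : ℕ) {u : ℝ} (hu₀ : 0 ≤ u) (hu₁ : u < 1) :
    (√(1 - u))⁻¹ - invSqrtPartial n u ∈ Set.Icc 0 (u ^ (n + 1) / √(1 - u)) := by
  have hs : 0 < √(1 - u) := sqrt_pos.2 (by linarith)
  have hle := invSqrtPartial_mul_sqrt_le n hu₀ hu₁.le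
  have hge := one_sub_pow_le_invSqrtPartial_mul_sqrt n hu₀ hu₁.le
  have hgap : 1 / √(1 - u) - invSqrtPartial n u =
      (1 - invSqrtPartial n u * √(1 - u)) / √(1 - u) := by
    field_simp
  rw [← one_div, Set.mem_Icc, sub_nonneg, le_div_iff₀ hs, hgap]
  exact ⟨hle, by gcongr; linarith⟩

noncomputable def arcsinPartial (n : ℕ) (x : ℝ) : ℝ :=
  ∑ k ∈ range (n + 1), arcsinCoeff k * x ^ (2 * k + 1)

lemma continuous_arcsinPartial (n : ℕ) : Continuous (arcsinPartial n) := by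
  unfold arcsinPartial
  fun_prop

lemma hasDerivAt_arcsinPartial (n : ℕ) (x : ℝ) :
    HasDerivAt (arcsinPartial n) (invSqrtPartial n (x ^ 2)) x := by
  have h := HasDerivAt.fun_sum (u := range (n + 1)) (x := x) fun k _ =>
    (hasDerivAt_pow (2 * k + 1) x).const_mul (arcsinCoeff k)
  refine h.congr_deriv (sum_congr rfl fun k _ => ?_)
  rw [arcsinCoeff_eq, Nat.add_sub_cancel, pow_mul]
  push_cast
  field_simp

lemma hasDerivAt_arcsin_sub_arcsinPartial (n : ℕ) {t : ℝ} (ht : t ∈ Set.Ioo (-1 : ℝ) 1) :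
    HasDerivAt (fun y => arcsin y - arcsinPartial n y)
      ((√(1 - t ^ 2))⁻¹ - invSqrtPartial n (t ^ 2)) t :=
  ((hasDerivAt_arcsin ht.1.ne' ht.2.ne).fun_sub (hasDerivAt_arcsinPartial n t)).congr_deriv
    (by rw [one_div])

lemma arcsin_sub_arcsinPartial_mem_Icc (n : ℕ) {x : ℝ} (hx₀ : 0 ≤ x) (hx₁ : x < 1) :
    arcsin x - arcsinPartial n x ∈ Set.Icc 0 (x ^ (2 * n + 3) / √(1 - x ^ 2)) := by
  set g := fun y => arcsin y - arcsinPartial n y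
  have hg : ∀ t ∈ Set.Icc 0 x, HasDerivAt g _ t := fun t ht =>
    hasDerivAt_arcsin_sub_arcsinPartial n ⟨by linarith [ht.1], by linarith [ht.2]⟩
  have hcont : ContinuousOn g (Set.Icc 0 x) := fun t ht =>
    (hg t ht).continuousAt.continuousWithinAt
  have hdiff : DifferentiableOn ℝ g (interior (Set.Icc 0 x)) := fun t ht =>
    (hg t (interior_subset ht)).differentiableAt.differentiableWithinAt
  have hderiv : ∀ t ∈ interior (Set.Icc 0 x),
      deriv g t ∈ Set.Icc 0 (x ^ (2 * n + 2) / √(1 - x ^ 2)) := by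
    intro t ht
    rw [interior_Icc] at ht
    have ht₁ : t ^ 2 ≤ x ^ 2 := by nlinarith [ht.1, ht.2]
    have hx₂ : x ^ 2 < 1 := by nlinarith
    rw [(hg t (Set.Ioo_subset_Icc_self ht)).deriv]
    obtain ⟨hlow, hup⟩ := inv_sqrt_sub_invSqrtPartial_mem_Icc n (sq_nonneg t) (by linarith)
    refine ⟨hlow, hup.trans ?_⟩
    calc (t ^ 2) ^ (n + 1) / √(1 - t ^ 2)
        ≤ (x ^ 2) ^ (n + 1) / √(1 - x ^ 2) := by gcongr
      _ = x ^ (2 * n + 2) / √(1 - x ^ 2) := by ring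
  have h0 : (0 : ℝ) ∈ Set.Icc 0 x := Set.left_mem_Icc.2 hx₀
  have hx : x ∈ Set.Icc 0 x := Set.right_mem_Icc.2 hx₀
  have hlow := (convex_Icc 0 x).mul_sub_le_image_sub_of_le_deriv hcont hdiff
    (fun t ht => (hderiv t ht).1) 0 h0 x hx hx₀
  have hup := (convex_Icc 0 x).image_sub_le_mul_sub_of_deriv_le hcont hdiff
    (fun t ht => (hderiv t ht).2) 0 h0 x hx hx₀
  have hg0 : g 0 = 0 := by simp [g, arcsinPartial]
  rw [hg0, sub_zero, sub_zero] at hlow hup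
  rw [zero_mul] at hlow
  exact ⟨hlow, hup.trans_eq (by ring)⟩

lemma hasSum_sub_succ_of_antitone {f : ℕ → ℝ} (hf : Antitone f) (h : Tendsto f atTop (𝓝 0)) :
    HasSum (fun n => f n - f (n + 1)) (f 0) := by
  rw [hasSum_iff_tendsto_nat_of_nonneg fun n => sub_nonneg.2 (hf n.le_succ)]
  simp_rw [sum_range_sub']
  simpa using (tendsto_const_nhds (x := f 0)).sub h

lemma antitone_invSqrtCoeff : Antitone invSqrtCoeff :=
  antitone_nat_of_succ_le fun k => by
    rw [← sub_nonneg, invSqrtCoeff_sub_succ]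
    exact div_nonneg (invSqrtCoeff_pos k).le (by positivity)

lemma tendsto_invSqrtCoeff_atTop : Tendsto invSqrtCoeff atTop (𝓝 0) := by
  have h : Tendsto (fun k : ℕ => (√(2 * k + 1))⁻¹) atTop (𝓝 0) :=
    tendsto_inv_atTop_zero.comp <| tendsto_sqrt_atTop.comp <|
      tendsto_atTop_add_const_right _ 1 <| tendsto_natCast_atTop_atTop.const_mul_atTop two_pos
  exact tendsto_of_tendsto_of_tendsto_of_le_of_le tendsto_const_nhds h
    (fun k => (invSqrtCoeff_pos k).le) invSqrtCoeff_le

lemma hasSum_invSqrtCoeff_sub_succ (m : ℕ) :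
    HasSum (fun k => invSqrtCoeff (k + m) - invSqrtCoeff (k + m + 1)) (invSqrtCoeff m) := by
  simpa [add_right_comm] using hasSum_sub_succ_of_antitone
    (antitone_invSqrtCoeff.comp_monotone fun _ _ h => Nat.add_le_add_right h m)
    (tendsto_invSqrtCoeff_atTop.comp (tendsto_add_atTop_nat m))

lemma summable_arcsinCoeff : Summable arcsinCoeff :=
  .of_nonneg_of_le arcsinCoeff_nonneg arcsinCoeff_le_two_mul_invSqrtCoeff_sub_succ
    (by simpa using ((hasSum_invSqrtCoeff_sub_succ 0).mul_left 2).summable)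

lemma sum_range_arcsinCoeff_le_pi_div_two (n : ℕ) :
    ∑ k ∈ range (n + 1), arcsinCoeff k ≤ π / 2 := by
  have h : Tendsto (arcsinPartial n) (𝓝[<] 1) (𝓝 (∑ k ∈ range (n + 1), arcsinCoeff k)) := by
    simpa [arcsinPartial] using
      ((continuous_arcsinPartial n).tendsto 1).mono_left nhdsWithin_le_nhds
  refine le_of_tendsto h ?_
  filter_upwards [Ioo_mem_nhdsLT one_pos] with x hx
  linarith [(arcsin_sub_arcsinPartial_mem_Icc n hx.1.le hx.2).1, arcsin_le_pi_div_two x]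

lemma arcsin_le_tsum_arcsinCoeff {x : ℝ} (hx₀ : 0 ≤ x) (hx₁ : x < 1) :
    arcsin x ≤ ∑' k, arcsinCoeff k := by
  have hpow : Tendsto (fun n : ℕ => x ^ (2 * n + 3) / √(1 - x ^ 2)) atTop (𝓝 0) := by
    have hexp : Tendsto (fun n : ℕ => 2 * n + 3) atTop atTop :=
      tendsto_atTop_mono (fun n => by simp only [id]; omega) tendsto_id
    simpa using ((tendsto_pow_atTop_nhds_zero_of_lt_one hx₀ hx₁).comp hexp).div_const _
  refine ge_of_tendsto (by simpa using hpow.const_add (∑' k, arcsinCoeff k))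
    (Eventually.of_forall fun n => ?_)
  have hpartial : arcsinPartial n x ≤ ∑' k, arcsinCoeff k := by
    refine le_trans (sum_le_sum fun k _ => ?_)
      (summable_arcsinCoeff.sum_le_tsum _ fun k _ => arcsinCoeff_nonneg k)
    exact mul_le_of_le_one_right (arcsinCoeff_nonneg k) (pow_le_one₀ hx₀ hx₁.le)
  linarith [(arcsin_sub_arcsinPartial_mem_Icc n hx₀ hx₁).2]

lemma hasSum_arcsinCoeff : HasSum arcsinCoeff (π / 2) := by
  refine summable_arcsinCoeff.hasSum_iff.2 (le_antisymm ?_ ?_)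
  · exact le_of_tendsto'
      ((tendsto_add_atTop_iff_nat 1).2 summable_arcsinCoeff.hasSum.tendsto_sum_nat)
      sum_range_arcsinCoeff_le_pi_div_two
  · have h : Tendsto arcsin (𝓝[<] 1) (𝓝 (π / 2)) := by
      simpa using (continuous_arcsin.tendsto 1).mono_left nhdsWithin_le_nhds
    refine le_of_tendsto h ?_
    filter_upwards [Ioo_mem_nhdsLT one_pos] with x hx
    exact arcsin_le_tsum_arcsinCoeff hx.1.le hx.2

lemma pi_div_two_sub_sum_range_arcsinCoeff (m : ℕ) :
    π / 2 - ∑ k ∈ range m, arcsinCoeff k = ∑' k, arcsinCoeff (k + m) := by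
  rw [← hasSum_arcsinCoeff.tsum_eq, ← summable_arcsinCoeff.sum_add_tsum_nat_add m]
  ring

lemma invSqrtCoeff_le_tsum_arcsinCoeff_add (m : ℕ) :
    invSqrtCoeff m ≤ ∑' k, arcsinCoeff (k + m) :=
  hasSum_le (fun k => invSqrtCoeff_sub_succ_le_arcsinCoeff (k + m))
    (hasSum_invSqrtCoeff_sub_succ m) ((summable_nat_add_iff m).2 summable_arcsinCoeff).hasSum

lemma tsum_arcsinCoeff_add_le (m : ℕ) :
    ∑' k, arcsinCoeff (k + m) ≤ 2 * invSqrtCoeff m :=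
  hasSum_le (fun k => arcsinCoeff_le_two_mul_invSqrtCoeff_sub_succ (k + m))
    ((summable_nat_add_iff m).2 summable_arcsinCoeff).hasSum
    ((hasSum_invSqrtCoeff_sub_succ m).mul_left 2)

/-- There are absolute constants `c₁, c₂ > 0` such that for every integer `τ ≥ 1`,
`c₁ · τ^{-1/2} ≤ π/2 − Σ_{k=0}^{τ} c_k ≤ c₂ · τ^{-1/2}`. -/
theorem pi_div_two_sub_taylor_partial_sum_bounds :
    ∃ c₁ c₂ : ℝ, c₁ > 0 ∧ c₂ > 0 ∧ ∀ τ : ℕ, 1 ≤ τ →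
      c₁ * (Real.sqrt τ)⁻¹ ≤ Real.pi / 2 - ∑ k ∈ Finset.range (τ + 1), arcsinCoeff k ∧
      Real.pi / 2 - ∑ k ∈ Finset.range (τ + 1), arcsinCoeff k ≤ c₂ * (Real.sqrt τ)⁻¹ := by
  refine ⟨1 / 4, 2, by norm_num, by norm_num, fun τ hτ => ?_⟩
  rw [pi_div_two_sub_sum_range_arcsinCoeff]
  have hτ' : (1 : ℝ) ≤ τ := by exact_mod_cast hτ
  have hlower : 1 / 4 * (√τ)⁻¹ ≤ invSqrtCoeff (τ + 1) :=
    calc 1 / 4 * (√τ)⁻¹ = (√(16 * τ))⁻¹ := by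
          rw [sqrt_mul (by norm_num), show (16 : ℝ) = 4 ^ 2 by norm_num, sqrt_sq (by norm_num)]
          ring
      _ ≤ (√(4 * ((τ + 1 : ℕ) : ℝ)))⁻¹ :=
          inv_anti₀ (by positivity) (sqrt_le_sqrt (by push_cast; linarith))
      _ ≤ invSqrtCoeff (τ + 1) := inv_sqrt_le_invSqrtCoeff (τ + 1)
  have hupper : invSqrtCoeff (τ + 1) ≤ (√τ)⁻¹ :=
    calc invSqrtCoeff (τ + 1) ≤ (√(2 * ((τ + 1 : ℕ) : ℝ) + 1))⁻¹ := invSqrtCoeff_le (τ + 1)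
      _ ≤ (√τ)⁻¹ := inv_anti₀ (by positivity) (sqrt_le_sqrt (by push_cast; linarith))
  exact ⟨hlower.trans (invSqrtCoeff_le_tsum_arcsinCoeff_add _),
    (tsum_arcsinCoeff_add_le _).trans (by linarith)⟩
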